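/- (Isometry between Hamming weight on F_4² and Bachoc weight on M_2(F_2)) For a, b, c, d ∈ F_2, let M = [[a+d, b+c],[b+c+d, a+b+d]] ∈ M_2(F_2). Then: M = 0 if and only if (a,b) = (0,0) and (c,d) = (0,0); and M is invertible if and only if exactly one of the pairs (a,b), (c,d) is nonzero. Consequently M is a nonzero non-unit if and only if both pairs are nonzero. -/

import Mathlib

/-!
Writing `N(x + yω) = x² + xy + y²` for the norm of `𝔽₄ = 𝔽₂(ω)`, in characteristic 2 one has
`det φ(u, v) = N(u) + N(v)`. The norm form is anisotropic, so over `𝔽₂` it is `1` exactly on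
nonzero elements, and `det φ(u, v) ≠ 0` iff exactly one of `u`, `v` is nonzero. That `φ(u, v) = 0`
only for `u = v = 0` is injectivity of a linear map.
-/

open Matrix

variable {R : Type*} [CommRing R]

/-- `φ(a + bω, c + dω)`. -/
def phi (a b c d : R) : Matrix (Fin 2) (Fin 2) R := !![a + d, b + c; b + c + d, a + b + d]

theorem phi_eq_zero_iff (a b c d : R) : phi a b c d = 0 ↔ a = 0 ∧ b = 0 ∧ c = 0 ∧ d = 0 := by
  simp only [phi, ← Matrix.ext_iff, Fin.forall_fin_two, of_apply, cons_val', cons_val_zero, cons_val_one,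
    empty_val', cons_val_fin_one, Matrix.zero_apply]
  constructor
  · rintro ⟨⟨h00, h01⟩, h10, h11⟩
    have hd : d = 0 := by linear_combination h10 - h01
    refine ⟨?_, ?_, ?_, hd⟩
    · linear_combination h00 - hd
    · linear_combination h11 - h00
    · linear_combination h01 - h11 + h00
  · rintro ⟨rfl, rfl, rfl, rfl⟩
    simp

theorem det_phi [CharP R 2] (a b c d : R) :
    (phi a b c d).det = (a ^ 2 + a * b + b ^ 2) + (c ^ 2 + c * d + d ^ 2) := by
  rw [phi, det_fin_two_of]
  linear_combination (a * d - b ^ 2 - b * c - c ^ 2 - c * d) * CharTwo.two_eq_zero (R := R)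

/-- `X² + X + 1` has no root in `𝔽₂`. -/
theorem sq_add_mul_add_sq_eq_zero_iff (x y : ZMod 2) :
    x ^ 2 + x * y + y ^ 2 = 0 ↔ (x, y) = (0, 0) := by
  revert x y; decide

theorem zmod_two_eq_iff_eq_zero_iff (u v : ZMod 2) : u = v ↔ (u = 0 ↔ v = 0) := by
  revert u v; decide

theorem isUnit_phi_iff (a b c d : ZMod 2) :
    IsUnit (phi a b c d) ↔ ¬((a, b) = (0, 0) ↔ (c, d) = (0, 0)) := by
  rw [isUnit_iff_isUnit_det, isUnit_iff_ne_zero, det_phi, Ne, CharTwo.add_eq_zero,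
    zmod_two_eq_iff_eq_zero_iff, sq_add_mul_add_sq_eq_zero_iff, sq_add_mul_add_sq_eq_zero_iff]

theorem stmt_9 (a b c d : ZMod 2) :
    let M : Matrix (Fin 2) (Fin 2) (ZMod 2) := !![a + d, b + c; b + c + d, a + b + d]
    (M = 0 ↔ (a, b) = (0, 0) ∧ (c, d) = (0, 0)) ∧
    (IsUnit M ↔ ((a, b) ≠ (0, 0) ∧ (c, d) = (0, 0)) ∨ ((a, b) = (0, 0) ∧ (c, d) ≠ (0, 0))) ∧
    (M ≠ 0 ∧ ¬IsUnit M ↔ (a, b) ≠ (0, 0) ∧ (c, d) ≠ (0, 0)) := by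
  intro M
  rw [show M = phi a b c d from rfl]
  have hzero : phi a b c d = 0 ↔ (a, b) = (0, 0) ∧ (c, d) = (0, 0) := by
    simpa only [Prod.ext_iff, and_assoc] using phi_eq_zero_iff a b c d
  rw [ne_eq, hzero, isUnit_phi_iff]
  tauto
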